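/- arXiv:2603.15795 — 4 statements merged into one kernel-verified Lean document; each statement's English description precedes it below -/
import Mathlib

section
/- For every nonnegative integer n and real x, the n-th Legendre polynomial P_n(x) = (1/(2^n n!)) d^n/dx^n (x^2-1)^n equals β_n(x) := ∑_{s=0}^{⌊n/2⌋} (n! / (2^{2s} (n-2s)! (s!)^2)) x^{n-2s} (x^2-1)^s. -/
/-- The `n`-th Legendre polynomial via the Rodrigues formula. -/
noncomputable def legendreP (n : ℕ) (x : ℝ) : ℝ :=
  (1 / (2 ^ n * (n.factorial : ℝ))) * iteratedDeriv n (fun y : ℝ => (y ^ 2 - 1) ^ n) x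

/-- `β_n(x) = ∑_{s=0}^{⌊n/2⌋} n!/(2^{2s}(n-2s)!(s!)^2) x^{n-2s} (x²-1)^s`. -/
noncomputable def beta (n : ℕ) (x : ℝ) : ℝ :=
  ∑ s ∈ Finset.range (n / 2 + 1),
    (n.factorial : ℝ) / (2 ^ (2 * s) * ((n - 2 * s).factorial : ℝ) * ((s.factorial : ℝ)) ^ 2) *
      x ^ (n - 2 * s) * (x ^ 2 - 1) ^ s

open Polynomial Finset

lemma my_iteratedDeriv_eval (p : Polynomial ℝ) (k : ℕ) :
    iteratedDeriv k (fun y : ℝ => p.eval y) = fun x => (derivative^[k] p).eval x := by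
  induction k with
  | zero => simp
  | succ k ih =>
      rw [iteratedDeriv_succ, ih]
      funext x
      rw [Function.iterate_succ_apply']
      exact Polynomial.deriv _

lemma my_vandermonde {n k : ℕ} (hk : k ≤ n) :
    n.choose k = ∑ s ∈ Finset.range (n+1), k.choose s * (n-k).choose s := by
  have h1 : n.choose k = (k + (n-k)).choose k := by rw [Nat.add_sub_cancel' hk]
  rw [h1, Nat.add_choose_eq, Finset.Nat.sum_antidiagonal_eq_sum_range_succ_mk]
  rw [← Finset.sum_range_reflect]
  have h2 : ∀ j ∈ Finset.range (k+1),
      k.choose (k.succ - 1 - j, k - (k.succ - 1 - j)).1 *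
        (n-k).choose (k.succ - 1 - j, k - (k.succ - 1 - j)).2
      = k.choose j * (n-k).choose j := by
    intro j hj
    rw [Finset.mem_range, Nat.lt_succ_iff] at hj
    have e1 : k.succ - 1 - j = k - j := by omega
    have e2 : k - (k - j) = j := Nat.sub_sub_self hj
    simp only [e1, e2, Nat.choose_symm hj]
  rw [Finset.sum_congr rfl h2]
  rw [← Finset.sum_range_add_sum_Ico _ (Nat.succ_le_succ hk)]
  have h3 : ∀ j ∈ Finset.Ico (k+1) (n+1), k.choose j * (n-k).choose j = 0 := by
    intro j hj
    rw [Finset.mem_Ico] at hj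
    rw [Nat.choose_eq_zero_of_lt hj.1, zero_mul]
  rw [Finset.sum_congr rfl h3, Finset.sum_const_zero, add_zero]

lemma my_coeff_nat (n s j : ℕ) (h : 2*s + j ≤ n) :
    n.choose (2*s) * (2*s).choose s * (n-2*s).choose j
      = n.choose (j+s) * (j+s).choose s * (n-(j+s)).choose s := by
  have h1 : 2*s ≤ n := by omega
  have h2 : s ≤ 2*s := by omega
  have h3 : j ≤ n - 2*s := by omega
  have h4 : j+s ≤ n := by omega
  have h5 : s ≤ j+s := by omega
  have h6 : s ≤ n-(j+s) := by omega
  have := @Nat.cast_inj ℚ _ _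
  rw [← this]
  push_cast
  rw [Nat.cast_choose ℚ h1, Nat.cast_choose ℚ h2, Nat.cast_choose ℚ h3,
    Nat.cast_choose ℚ h4, Nat.cast_choose ℚ h5, Nat.cast_choose ℚ h6]
  have e1 : 2*s - s = s := by omega
  have e2 : j + s - s = j := by omega
  have e3 : n - 2*s - j = n - (j+s) - s := by omega
  rw [e1, e2, e3]
  field_simp

lemma my_term_eq (n s j : ℕ) (a b : ℝ) :
    (n.choose (2*s) * ((2*s).choose s) * ((n-2*s).choose j) : ℝ) * (a^(j+s) * b^(n-2*s-j+s))
      = (n.choose (j+s) * ((j+s).choose s) * ((n-(j+s)).choose s) : ℝ)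
          * (a^(j+s) * b^(n-(j+s))) := by
  by_cases h : 2*s + j ≤ n
  · have e : n-2*s-j+s = n-(j+s) := by omega
    rw [e, ← Nat.cast_mul, ← Nat.cast_mul, my_coeff_nat n s j h, Nat.cast_mul, Nat.cast_mul]
  · have hL : n.choose (2*s) * ((2*s).choose s) * ((n-2*s).choose j) = 0 := by
      rcases le_or_gt (2*s) n with h1 | h1
      · rw [Nat.choose_eq_zero_of_lt (by omega : n - 2*s < j)]; ring
      · rw [Nat.choose_eq_zero_of_lt h1]; ring
    have hR : n.choose (j+s) * ((j+s).choose s) * ((n-(j+s)).choose s) = 0 := by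
      rcases le_or_gt (j+s) n with h1 | h1
      · rw [Nat.choose_eq_zero_of_lt (by omega : n - (j+s) < s)]; ring
      · rw [Nat.choose_eq_zero_of_lt h1]; ring
    rw [← Nat.cast_mul, ← Nat.cast_mul, hL, ← Nat.cast_mul (n.choose (j+s)), ← Nat.cast_mul, hR]
    simp

lemma my_shift_sum (n s : ℕ) (hs : s ≤ n) (f : ℕ → ℝ)
    (h0 : ∀ k < s, f k = 0) (h1 : ∀ k > n, f k = 0) :
    ∑ j ∈ range (n+1), f (j+s) = ∑ k ∈ range (n+1), f k := by
  have e1 : ∑ j ∈ range (n+1), f (j+s) = ∑ k ∈ Ico s (n+1+s), f k := by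
    rw [Finset.sum_Ico_eq_sum_range]
    have : n+1+s-s = n+1 := by omega
    rw [this]
    exact Finset.sum_congr rfl fun j _ => by rw [add_comm]
  have e2 : ∑ k ∈ Ico s (n+1+s), f k = ∑ k ∈ Ico s (n+1), f k := by
    rw [← Finset.sum_Ico_consecutive f (by omega : s ≤ n+1) (by omega : n+1 ≤ n+1+s)]
    have : ∑ k ∈ Ico (n+1) (n+1+s), f k = 0 :=
      Finset.sum_eq_zero fun k hk => h1 k (by rw [Finset.mem_Ico] at hk; omega)
    rw [this, add_zero]
  have e3 : ∑ k ∈ range (n+1), f k = ∑ k ∈ Ico s (n+1), f k := by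
    rw [Finset.range_eq_Ico,
      ← Finset.sum_Ico_consecutive f (by omega : 0 ≤ s) (by omega : s ≤ n+1)]
    have : ∑ k ∈ Ico 0 s, f k = 0 :=
      Finset.sum_eq_zero fun k hk => h0 k (by rw [Finset.mem_Ico] at hk; omega)
    rw [this, zero_add]
  rw [e1, e2, e3]

lemma my_key (n : ℕ) (a b : ℝ) :
    ∑ s ∈ range (n/2+1),
        ((n.choose (2*s)) * ((2*s).choose s) : ℝ) * ((a+b)^(n-2*s) * (a*b)^s)
      = ∑ k ∈ range (n+1), ((n.choose k : ℝ))^2 * (a^k * b^(n-k)) := by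
  have step1 : ∀ s : ℕ,
      ((n.choose (2*s)) * ((2*s).choose s) : ℝ) * ((a+b)^(n-2*s) * (a*b)^s)
        = ∑ j ∈ range (n-2*s+1),
            ((n.choose (2*s)) * ((2*s).choose s) * ((n-2*s).choose j) : ℝ)
              * (a^(j+s) * b^(n-2*s-j+s)) := by
    intro s
    rw [add_pow, Finset.sum_mul, Finset.mul_sum]
    refine Finset.sum_congr rfl fun j hj => ?_
    rw [pow_add, pow_add, mul_pow]
    ring
  calc
    ∑ s ∈ range (n/2+1),
        ((n.choose (2*s)) * ((2*s).choose s) : ℝ) * ((a+b)^(n-2*s) * (a*b)^s)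
      = ∑ s ∈ range (n/2+1), ∑ j ∈ range (n+1),
          ((n.choose (2*s)) * ((2*s).choose s) * ((n-2*s).choose j) : ℝ)
            * (a^(j+s) * b^(n-2*s-j+s)) := by
        refine Finset.sum_congr rfl fun s hs => ?_
        rw [Finset.mem_range, Nat.lt_succ_iff] at hs
        have h2s : 2*s ≤ n := by omega
        rw [step1 s]
        refine Finset.sum_subset (Finset.range_subset_range.mpr (by omega)) ?_
        intro j _ hj
        rw [Finset.mem_range, Nat.lt_succ_iff, not_le] at hj
        rw [Nat.choose_eq_zero_of_lt (by omega : n - 2*s < j)]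
        simp
    _ = ∑ s ∈ range (n+1), ∑ j ∈ range (n+1),
          ((n.choose (2*s)) * ((2*s).choose s) * ((n-2*s).choose j) : ℝ)
            * (a^(j+s) * b^(n-2*s-j+s)) := by
        refine Finset.sum_subset (Finset.range_subset_range.mpr (by omega)) ?_
        intro s _ hs
        rw [Finset.mem_range, Nat.lt_succ_iff, not_le] at hs
        refine Finset.sum_eq_zero fun j _ => ?_
        rw [Nat.choose_eq_zero_of_lt (by omega : n < 2*s)]
        simp
    _ = ∑ s ∈ range (n+1), ∑ j ∈ range (n+1),
          ((n.choose (j+s)) * ((j+s).choose s) * ((n-(j+s)).choose s) : ℝ)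
            * (a^(j+s) * b^(n-(j+s))) := by
        refine Finset.sum_congr rfl fun s _ => Finset.sum_congr rfl fun j _ => ?_
        exact my_term_eq n s j a b
    _ = ∑ s ∈ range (n+1), ∑ k ∈ range (n+1),
          ((n.choose k) * (k.choose s) * ((n-k).choose s) : ℝ) * (a^k * b^(n-k)) := by
        refine Finset.sum_congr rfl fun s hs => ?_
        rw [Finset.mem_range, Nat.lt_succ_iff] at hs
        exact my_shift_sum n s hs
          (fun k => ((n.choose k) * (k.choose s) * ((n-k).choose s) : ℝ) * (a^k * b^(n-k)))
          (fun k hk => by simp [Nat.choose_eq_zero_of_lt hk])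
          (fun k hk => by simp [Nat.choose_eq_zero_of_lt hk])
    _ = ∑ k ∈ range (n+1), ∑ s ∈ range (n+1),
          ((n.choose k) * (k.choose s) * ((n-k).choose s) : ℝ) * (a^k * b^(n-k)) :=
        Finset.sum_comm
    _ = ∑ k ∈ range (n+1), ((n.choose k : ℝ))^2 * (a^k * b^(n-k)) := by
        refine Finset.sum_congr rfl fun k hk => ?_
        rw [Finset.mem_range, Nat.lt_succ_iff] at hk
        have hv : ((n.choose k : ℝ))
            = ∑ s ∈ range (n+1), (k.choose s : ℝ) * (((n-k).choose s : ℝ)) := by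
          rw [my_vandermonde hk]
          push_cast
          rfl
        calc
          ∑ s ∈ range (n+1),
              ((n.choose k) * (k.choose s) * ((n-k).choose s) : ℝ) * (a^k * b^(n-k))
            = (∑ s ∈ range (n+1), (k.choose s : ℝ) * (((n-k).choose s : ℝ)))
                * ((n.choose k : ℝ) * (a^k * b^(n-k))) := by
              rw [Finset.sum_mul]
              exact Finset.sum_congr rfl fun s _ => by ring
          _ = ((n.choose k : ℝ))^2 * (a^k * b^(n-k)) := by rw [← hv]; ring

lemma my_descFact (n k : ℕ) (hk : k ≤ n) :
    n.choose k * n.descFactorial (n-k) * n.descFactorial k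
      = n.factorial * (n.choose k)^2 := by
  rw [Nat.descFactorial_eq_factorial_mul_choose, Nat.descFactorial_eq_factorial_mul_choose,
    Nat.choose_symm hk, ← Nat.choose_mul_factorial_mul_factorial hk]
  ring

theorem legendre_eq_beta : ∀ (n : ℕ) (x : ℝ), legendreP n x = beta n x := by
  intro n x
  -- Step 1: express the Rodrigues derivative via polynomials
  have hfun : (fun y : ℝ => (y ^ 2 - 1) ^ n)
      = fun y => Polynomial.eval y (((X - C (1:ℝ)) * (X - C (-1))) ^ n) := by
    funext y
    simp only [Polynomial.eval_pow, Polynomial.eval_mul, Polynomial.eval_sub,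
      Polynomial.eval_X, Polynomial.eval_C]
    congr 1
    ring
  have hleg : legendreP n x = (1 / (2 ^ n * (n.factorial : ℝ)))
      * (derivative^[n] (((X - C (1:ℝ)) * (X - C (-1))) ^ n)).eval x := by
    rw [legendreP, hfun, my_iteratedDeriv_eval]
  have hD : derivative^[n] (((X - C (1:ℝ)) * (X - C (-1))) ^ n)
      = ∑ k ∈ range (n+1), (n.choose k)
          • ((n.descFactorial (n-k)) • (X - C (1:ℝ)) ^ (n-(n-k))
              * ((n.descFactorial k) • (X - C (-1:ℝ)) ^ (n-k))) := by
    rw [mul_pow, Polynomial.iterate_derivative_mul]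
    refine Finset.sum_congr rfl fun k _ => ?_
    rw [Polynomial.iterate_derivative_X_sub_pow, Polynomial.iterate_derivative_X_sub_pow]
  have heval : legendreP n x = (1 / (2 ^ n * (n.factorial : ℝ)))
      * ∑ k ∈ range (n+1),
          ((n.choose k : ℝ) * ((n.descFactorial (n-k) : ℝ) * (x - 1) ^ (n-(n-k)))
            * ((n.descFactorial k : ℝ) * (x + 1) ^ (n-k))) := by
    rw [hleg, hD, Polynomial.eval_finset_sum]
    congr 1
    refine Finset.sum_congr rfl fun k _ => ?_
    simp only [Polynomial.eval_smul, Polynomial.eval_mul, Polynomial.eval_pow,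
      Polynomial.eval_sub, Polynomial.eval_X, Polynomial.eval_C, smul_eq_mul,
      nsmul_eq_mul, Polynomial.eval_natCast]
    push_cast
    ring
  have hleg2 : legendreP n x
      = (1 / (2:ℝ) ^ n) * ∑ k ∈ range (n+1),
          ((n.choose k : ℝ))^2 * ((x-1)^k * (x+1)^(n-k)) := by
    rw [heval, Finset.mul_sum, Finset.mul_sum]
    refine Finset.sum_congr rfl fun k hk => ?_
    rw [Finset.mem_range, Nat.lt_succ_iff] at hk
    have e : n - (n-k) = k := by omega
    rw [e]
    have hfact : ((n.choose k * n.descFactorial (n-k) * n.descFactorial k : ℕ) : ℝ)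
        = ((n.factorial * (n.choose k)^2 : ℕ) : ℝ) := by rw [my_descFact n k hk]
    push_cast at hfact
    have hT : (n.choose k : ℝ) * ((n.descFactorial (n-k) : ℝ) * (x-1)^k)
          * ((n.descFactorial k : ℝ) * (x+1)^(n-k))
        = (n.factorial : ℝ) * ((n.choose k : ℝ))^2 * ((x-1)^k * (x+1)^(n-k)) := by
      linear_combination ((x-1)^k * (x+1)^(n-k)) * hfact
    rw [hT]
    have hne : (n.factorial : ℝ) ≠ 0 := Nat.cast_ne_zero.mpr n.factorial_ne_zero
    have h2 : (2:ℝ)^n ≠ 0 := by positivity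
    field_simp
  have hbeta : beta n x
      = (1 / (2:ℝ) ^ n) * ∑ s ∈ range (n/2+1),
          ((n.choose (2*s)) * ((2*s).choose s) : ℝ)
            * (((x-1)+(x+1))^(n-2*s) * ((x-1)*(x+1))^s) := by
    rw [beta, Finset.mul_sum]
    refine Finset.sum_congr rfl fun s hs => ?_
    rw [Finset.mem_range, Nat.lt_succ_iff] at hs
    have h2s : 2*s ≤ n := by omega
    have hc : (n.factorial : ℝ) / (2 ^ (2*s) * ((n - 2*s).factorial : ℝ)
          * ((s.factorial : ℝ)) ^ 2)
        = ((n.choose (2*s)) * ((2*s).choose s) : ℝ) / 2 ^ (2*s) := by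
      rw [Nat.cast_choose ℝ h2s, Nat.cast_choose ℝ (by omega : s ≤ 2*s)]
      have e : 2*s - s = s := by omega
      rw [e]
      have ne1 : ((n-2*s).factorial : ℝ) ≠ 0 := Nat.cast_ne_zero.mpr (Nat.factorial_ne_zero _)
      have ne2 : ((2*s).factorial : ℝ) ≠ 0 := Nat.cast_ne_zero.mpr (Nat.factorial_ne_zero _)
      have ne3 : ((s).factorial : ℝ) ≠ 0 := Nat.cast_ne_zero.mpr (Nat.factorial_ne_zero _)
      field_simp
    have hx : (x-1)+(x+1) = 2*x := by ring
    have hxx : (x-1)*(x+1) = x^2-1 := by ring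
    rw [hc, hx, hxx, mul_pow]
    have h2n : (2:ℝ)^n = 2^(n-2*s) * 2^(2*s) := by
      rw [← pow_add]
      congr 1
      omega
    have h2a : ((2:ℝ))^(2*s) ≠ 0 := by positivity
    have h2b : ((2:ℝ))^(n-2*s) ≠ 0 := by positivity
    rw [h2n]
    field_simp
  rw [hleg2, hbeta, my_key n (x-1) (x+1)]
end

section
/- For real x with |x| ≤ 1 and |t| sufficiently small, the generating function identity ∑_{n=0}^∞ P_n(x) t^n = (1 - 2xt + t^2)^{-1/2} holds, where P_n is the n-th Legendre polynomial. -/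
set_option maxHeartbeats 1000000

open Finset Nat

lemma conv_succ (n : ℕ) :
    ∑ i ∈ range (n + 2), centralBinom i * centralBinom (n + 1 - i)
      = 4 * ∑ i ∈ range (n + 1), centralBinom i * centralBinom (n - i) := by
  apply Nat.eq_of_mul_eq_mul_left (Nat.succ_pos n)
  have key : ∀ m : ℕ, ∑ i ∈ range (m + 1), (2 * i + 1) * (centralBinom i * centralBinom (m - i))
      = (m + 1) * ∑ i ∈ range (m + 1), centralBinom i * centralBinom (m - i) := by
    intro m
    have hrefl : ∑ i ∈ range (m + 1), (2 * i + 1) * (centralBinom i * centralBinom (m - i))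
        = ∑ i ∈ range (m + 1), (2 * (m - i) + 1) * (centralBinom i * centralBinom (m - i)) := by
      rw [← Finset.sum_range_reflect]
      apply Finset.sum_congr rfl
      intro i hi
      rw [Finset.mem_range] at hi
      have h1 : m + 1 - 1 - i = m - i := by omega
      have h2 : m - (m - i) = i := by omega
      rw [h1, h2, mul_comm (centralBinom (m - i))]
    have : 2 * ∑ i ∈ range (m + 1), (2 * i + 1) * (centralBinom i * centralBinom (m - i))
        = 2 * ((m + 1) * ∑ i ∈ range (m + 1), centralBinom i * centralBinom (m - i)) := by
      rw [two_mul]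
      nth_rewrite 2 [hrefl]
      rw [← Finset.sum_add_distrib, Finset.mul_sum, Finset.mul_sum]
      apply Finset.sum_congr rfl
      intro i hi
      rw [Finset.mem_range] at hi
      have : 2 * i + 1 + (2 * (m - i) + 1) = 2 * (m + 1) := by omega
      rw [← add_mul, this]
      ring
    omega
  calc (n + 1) * ∑ i ∈ range (n + 2), centralBinom i * centralBinom (n + 1 - i)
      = ∑ i ∈ range (n + 2), (i + (n + 1 - i)) * (centralBinom i * centralBinom (n + 1 - i)) := by
        rw [Finset.mul_sum]
        apply Finset.sum_congr rfl
        intro i hi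
        rw [Finset.mem_range] at hi
        congr 1
        omega
    _ = ∑ i ∈ range (n + 2), i * (centralBinom i * centralBinom (n + 1 - i))
        + ∑ i ∈ range (n + 2), (n + 1 - i) * (centralBinom i * centralBinom (n + 1 - i)) := by
        rw [← Finset.sum_add_distrib]
        apply Finset.sum_congr rfl
        intro i _
        rw [add_mul]
    _ = 2 * ∑ i ∈ range (n + 2), i * (centralBinom i * centralBinom (n + 1 - i)) := by
        have : ∑ i ∈ range (n + 2), (n + 1 - i) * (centralBinom i * centralBinom (n + 1 - i))
            = ∑ i ∈ range (n + 2), i * (centralBinom i * centralBinom (n + 1 - i)) := by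
          rw [← Finset.sum_range_reflect]
          apply Finset.sum_congr rfl
          intro i hi
          rw [Finset.mem_range] at hi
          have h1 : n + 2 - 1 - i = n + 1 - i := by omega
          have h2 : n + 1 - (n + 1 - i) = i := by omega
          rw [h1, h2, mul_comm (centralBinom (n + 1 - i))]
        rw [this]; ring
    _ = 2 * ∑ i ∈ range (n + 1), (i + 1) * (centralBinom (i + 1) * centralBinom (n - i)) := by
        congr 1
        rw [Finset.sum_range_succ']
        simp
    _ = 2 * ∑ i ∈ range (n + 1), 2 * ((2 * i + 1) * (centralBinom i * centralBinom (n - i))) := by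
        congr 1
        apply Finset.sum_congr rfl
        intro i _
        rw [← mul_assoc, Nat.succ_mul_centralBinom_succ]
        ring
    _ = 4 * ∑ i ∈ range (n + 1), (2 * i + 1) * (centralBinom i * centralBinom (n - i)) := by
        rw [← Finset.mul_sum]; ring
    _ = (n + 1) * (4 * ∑ i ∈ range (n + 1), centralBinom i * centralBinom (n - i)) := by
        rw [key]; ring

lemma centralBinom_conv (n : ℕ) :
    ∑ i ∈ range (n + 1), centralBinom i * centralBinom (n - i) = 4 ^ n := by
  induction n with
  | zero => simp [centralBinom]
  | succ n ih => rw [conv_succ, ih]; ring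


noncomputable def cb (k : ℕ) : ℝ := Nat.centralBinom k / 4 ^ k

lemma cb_nonneg (k : ℕ) : 0 ≤ cb k := by rw [cb]; positivity

lemma cb_le_one (k : ℕ) : cb k ≤ 1 := by
  rw [cb, div_le_one (by positivity)]
  calc (Nat.centralBinom k : ℝ) ≤ ((2 * k + 1).choose k : ℝ) := by
        exact_mod_cast Nat.choose_mono k (by omega)
    _ ≤ ((4 : ℕ) ^ k : ℝ) := by exact_mod_cast Nat.choose_middle_le_pow k
    _ = 4 ^ k := by push_cast; ring

lemma summable_norm_cb {u : ℝ} (hu : |u| < 1) :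
    Summable fun k => ‖cb k * u ^ k‖ := by
  apply Summable.of_nonneg_of_le (fun k => norm_nonneg _)
    (fun k => ?_) (summable_geometric_of_lt_one (abs_nonneg u) hu)
  rw [norm_mul, norm_pow, Real.norm_eq_abs, Real.norm_eq_abs,
    abs_of_nonneg (cb_nonneg k)]
  calc cb k * |u| ^ k ≤ 1 * |u| ^ k := by
        apply mul_le_mul_of_nonneg_right (cb_le_one k) (by positivity)
    _ = |u| ^ k := one_mul _

lemma hasSum_cb {u : ℝ} (hu : |u| < 1) :
    HasSum (fun k => cb k * u ^ k) (∑' k, cb k * u ^ k) :=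
  ((summable_norm_cb hu).of_norm).hasSum

lemma sq_tsum_cb {u : ℝ} (hu : |u| < 1) :
    (∑' k, cb k * u ^ k) * (∑' k, cb k * u ^ k) = (1 - u)⁻¹ := by
  have H := hasSum_sum_range_mul_of_summable_norm (summable_norm_cb hu) (summable_norm_cb hu)
  have H2 : ∀ n : ℕ, ∑ k ∈ range (n + 1), (cb k * u ^ k) * (cb (n - k) * u ^ (n - k)) = u ^ n := by
    intro n
    have : ∀ k ∈ range (n + 1), (cb k * u ^ k) * (cb (n - k) * u ^ (n - k))
        = (Nat.centralBinom k * Nat.centralBinom (n - k) : ℕ) / (4 : ℝ) ^ n * u ^ n := by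
      intro k hk
      rw [Finset.mem_range] at hk
      have h1 : u ^ k * u ^ (n - k) = u ^ n := by
        rw [← pow_add]; congr 1; omega
      have h2 : (4 : ℝ) ^ k * 4 ^ (n - k) = 4 ^ n := by
        rw [← pow_add]; congr 1; omega
      rw [cb, cb]
      push_cast
      field_simp
      rw [← h1, ← h2]
      ring
    rw [Finset.sum_congr rfl this]
    simp_rw [div_mul_eq_mul_div, ← Finset.sum_div, ← Finset.sum_mul, ← Nat.cast_sum, centralBinom_conv n]
    push_cast
    field_simp
  simp_rw [H2] at H
  exact H.unique (hasSum_geometric_of_abs_lt_one hu)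

lemma abs_tsum_cb_sub_one_lt {u : ℝ} (hu : |u| < 1 / 2) :
    |(∑' k, cb k * u ^ k) - 1| < 1 := by
  have hu1 : |u| < 1 := hu.trans (by norm_num)
  have h := hasSum_cb hu1
  have h1 : HasSum (fun n => cb (n + 1) * u ^ (n + 1))
      ((∑' k, cb k * u ^ k) - 1) := by
    have := (hasSum_nat_add_iff' (f := fun k => cb k * u ^ k) 1).mpr h
    simpa [cb] using this
  have hgeom : HasSum (fun n : ℕ => |u| ^ (n + 1)) (|u| * (1 - |u|)⁻¹) := by
    have := (hasSum_geometric_of_lt_one (abs_nonneg u) hu1).mul_left |u|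
    simpa [pow_succ, mul_comm] using this
  have hbound : |(∑' k, cb k * u ^ k) - 1| ≤ |u| * (1 - |u|)⁻¹ := by
    rw [← h1.tsum_eq, ← hgeom.tsum_eq]
    have hsumm : Summable fun n : ℕ => |cb (n + 1)| * |u| ^ (n + 1) := by
      have := (summable_nat_add_iff (f := fun k => ‖cb k * u ^ k‖) 1).mpr (summable_norm_cb hu1)
      simpa [Real.norm_eq_abs, abs_mul, abs_pow] using this
    have hle : ∀ n : ℕ, |cb (n + 1)| * |u| ^ (n + 1) ≤ |u| ^ (n + 1) := by
      intro n
      rw [abs_of_nonneg (cb_nonneg _)]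
      calc cb (n + 1) * |u| ^ (n + 1) ≤ 1 * |u| ^ (n + 1) :=
            mul_le_mul_of_nonneg_right (cb_le_one _) (by positivity)
        _ = |u| ^ (n + 1) := one_mul _
    calc |∑' n, cb (n + 1) * u ^ (n + 1)| ≤ ∑' n, |cb (n + 1)| * |u| ^ (n + 1) := by
          simpa [Real.norm_eq_abs, abs_mul, abs_pow] using
            norm_tsum_le_tsum_norm (f := fun n : ℕ => cb (n + 1) * u ^ (n + 1))
              (by simpa [Real.norm_eq_abs, abs_mul, abs_pow] using hsumm)
      _ ≤ ∑' n, |u| ^ (n + 1) := Summable.tsum_le_tsum hle hsumm hgeom.summable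
  have : |u| * (1 - |u|)⁻¹ < 1 := by
    rw [mul_inv_lt_iff₀ (by linarith [abs_nonneg u])]
    linarith
  linarith [hbound, this]

lemma tsum_cb_pos {u : ℝ} (hu : |u| < 1 / 2) : 0 < ∑' k, cb k * u ^ k := by
  have := abs_tsum_cb_sub_one_lt hu
  rw [abs_lt] at this
  linarith [this.1]

lemma hasSum_cb_rpow {u : ℝ} (hu : |u| < 1 / 2) :
    HasSum (fun k => cb k * u ^ k) ((1 - u) ^ (-(1 / 2 : ℝ))) := by
  have hu1 : |u| < 1 := hu.trans (by norm_num)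
  have hS := hasSum_cb hu1
  have hpos := tsum_cb_pos hu
  have h1u : (0 : ℝ) < 1 - u := by
    rcases abs_lt.mp hu1 with ⟨_, h2⟩; linarith
  have hEq : (∑' k, cb k * u ^ k) = (1 - u) ^ (-(1 / 2 : ℝ)) := by
    rw [Real.rpow_neg h1u.le, ← Real.sqrt_eq_rpow, ← Real.sqrt_inv,
      ← sq_tsum_cb hu1, Real.sqrt_mul_self hpos.le]
  rwa [hEq] at hS

lemma iter_deriv_sum_pow {ι : Type*} (s : Finset ι) (c : ι → ℝ) (m : ι → ℕ) (k : ℕ) :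
    deriv^[k] (fun x : ℝ => ∑ i ∈ s, c i * x ^ m i)
      = fun x => ∑ i ∈ s, c i * ((∏ r ∈ range k, ((m i : ℝ) - r)) * x ^ (m i - k)) := by
  induction k with
  | zero => simp
  | succ k ih =>
    rw [Function.iterate_succ_apply', ih]
    funext x
    rw [deriv_fun_sum (fun i _ => by
      exact (((differentiable_pow (𝕜 := ℝ) (𝔸 := ℝ) (m i - k)).differentiableAt).const_mul _).const_mul _)]
    apply Finset.sum_congr rfl
    intro i _
    rw [deriv_const_mul _ (((differentiable_pow (𝕜 := ℝ) (𝔸 := ℝ) (m i - k)).differentiableAt).const_mul _),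
      deriv_const_mul _ ((differentiable_pow (𝕜 := ℝ) (𝔸 := ℝ) (m i - k)).differentiableAt), deriv_pow_field]
    rcases le_or_gt (k + 1) (m i) with h | h
    · have h1 : m i - k - 1 = m i - (k + 1) := by omega
      have h2 : ((m i - k : ℕ) : ℝ) = (m i : ℝ) - k := by
        push_cast [Nat.cast_sub (by omega : k ≤ m i)]; ring
      rw [prod_range_succ, h1, h2]
      ring
    · have h0 : (∏ r ∈ range (k + 1), ((m i : ℝ) - r)) = 0 := by
        apply Finset.prod_eq_zero (Finset.mem_range.mpr (by omega : m i < k + 1))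
        simp
      have h0' : m i - k = 0 := by omega
      rw [h0, h0']
      simp

lemma cast_prod_sub (M k : ℕ) :
    (∏ r ∈ range k, ((M : ℝ) - r)) = (M.descFactorial k : ℝ) := by
  rcases le_or_gt k M with h | h
  · rw [Nat.descFactorial_eq_prod_range, Nat.cast_prod]
    apply Finset.prod_congr rfl
    intro r hr
    rw [Finset.mem_range] at hr
    rw [Nat.cast_sub (by omega)]
  · rw [Nat.descFactorial_eq_zero_iff_lt.mpr h, Nat.cast_zero]
    apply Finset.prod_eq_zero (Finset.mem_range.mpr h)
    simp


lemma legendreP_eq (n : ℕ) (x : ℝ) :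
    legendreP n x = ∑ m ∈ range (n + 1),
      (1 / (2 ^ n * (n.factorial : ℝ))) * ((-1) ^ (m + n) * (n.choose m : ℝ)
        * ((2 * m).descFactorial n : ℝ) * x ^ (2 * m - n)) := by
  have hfun : (fun y : ℝ => (y ^ 2 - 1) ^ n)
      = fun y => ∑ m ∈ range (n + 1), ((-1) ^ (m + n) * (n.choose m : ℝ)) * y ^ (2 * m) := by
    funext y
    rw [sub_pow]
    apply Finset.sum_congr rfl
    intro m _
    rw [← pow_mul]
    ring
  rw [legendreP, hfun, iteratedDeriv_eq_iterate, iter_deriv_sum_pow, Finset.mul_sum]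
  apply Finset.sum_congr rfl
  intro m _
  rw [cast_prod_sub]
  ring

noncomputable def Fgen (x t : ℝ) (p : ℕ × ℕ) : ℝ :=
  if p.2 ≤ p.1 then
    cb p.1 * (p.1.choose p.2 : ℝ) * (2 * x) ^ (p.1 - p.2) * (-1) ^ p.2 * t ^ (p.1 + p.2)
  else 0

lemma neg_one_pow_helper {a b : ℕ} (h : a + 2 * b = c) : ((-1 : ℝ)) ^ c = (-1) ^ a := by
  rw [← h, pow_add, pow_mul, neg_one_sq, one_pow, mul_one]

lemma hasSum_Fgen_fiber (x t : ℝ) (k : ℕ) :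
    HasSum (fun j => Fgen x t (k, j)) (cb k * (2 * x * t - t ^ 2) ^ k) := by
  have hsupp : ∀ j ∉ range (k + 1), Fgen x t (k, j) = 0 := by
    intro j hj
    rw [Finset.mem_range] at hj
    simp only [Fgen, if_neg (show ¬ j ≤ k by omega)]
  have H := hasSum_sum_of_ne_finset_zero (L := SummationFilter.unconditional ℕ) (s := range (k + 1))
    (f := fun j => Fgen x t (k, j)) hsupp
  convert H using 1
  have hu : 2 * x * t - t ^ 2 = t * (2 * x - t) := by ring
  rw [hu, mul_pow, sub_pow, Finset.mul_sum, Finset.mul_sum, ← Finset.sum_range_reflect]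
  apply Finset.sum_congr rfl
  intro m hm
  rw [Finset.mem_range] at hm
  have hm' : m ≤ k := by omega
  have h1 : k + 1 - 1 - m = k - m := by omega
  have h2 : k - (k - m) = m := by omega
  rw [h1, h2]
  simp only [Fgen, if_pos hm']
  have s1 : ((-1 : ℝ)) ^ (k - m + k) = (-1) ^ m := by
    exact neg_one_pow_helper (b := k - m) (c := k - m + k) (by omega)
  have s2 : t ^ (k + m) = t ^ k * t ^ m := by rw [← pow_add]
  have s3 : (k.choose (k - m) : ℝ) = (k.choose m : ℝ) := by
    rw [Nat.choose_symm hm']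
  rw [s1, s2, s3]
  ring

lemma sum_antidiagonal_Fgen (n : ℕ) (x t : ℝ) :
    ∑ p ∈ Finset.HasAntidiagonal.antidiagonal n, Fgen x t p = legendreP n x * t ^ n := by
  rw [Finset.Nat.sum_antidiagonal_eq_sum_range_succ_mk, legendreP_eq, Finset.sum_mul]
  apply Finset.sum_congr rfl
  intro m hm
  rw [Finset.mem_range] at hm
  have hmn : m ≤ n := by omega
  rcases le_or_gt n (2 * m) with h | h
  · simp only [Fgen, if_pos (show n - m ≤ m by omega)]
    have e1 : m + (n - m) = n := by omega
    have e2 : m - (n - m) = 2 * m - n := by omega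
    have e3 : ((-1 : ℝ)) ^ (m + n) = (-1) ^ (n - m) := by
      exact neg_one_pow_helper (b := m) (c := m + n) (by omega)
    have e4 : (2 * x) ^ (2 * m - n) = 2 ^ (2 * m - n) * x ^ (2 * m - n) := mul_pow _ _ _
    have e5 : ((2 * m).descFactorial n : ℝ) = (n.factorial : ℝ) * ((2 * m).choose n : ℝ) := by
      exact_mod_cast Nat.descFactorial_eq_factorial_mul_choose (2 * m) n
    have key : ((2 * m).choose n : ℝ) * (n.choose m : ℝ)
        = ((2 * m).choose m : ℝ) * (m.choose (n - m) : ℝ) := by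
      have := Nat.choose_mul (n := 2 * m) hmn
      rw [show 2 * m - m = m by omega] at this
      exact_mod_cast this
    have e6 : (2 : ℝ) ^ (2 * m - n) * 2 ^ n = 4 ^ m := by
      rw [← pow_add, show 2 * m - n + n = 2 * m by omega, pow_mul]
      norm_num
    have h4 : (0 : ℝ) < 4 ^ m := by positivity
    have h2 : (0 : ℝ) < 2 ^ n := by positivity
    have hf : (0 : ℝ) < (n.factorial : ℝ) := by exact_mod_cast n.factorial_pos
    have ecb : (Nat.centralBinom m : ℝ) = ((2 * m).choose m : ℝ) := rfl
    have hnum : ((Nat.centralBinom m : ℝ) * (m.choose (n - m) : ℝ) * 2 ^ (2 * m - n)) * 2 ^ n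
        = ((n.choose m : ℝ) * ((2 * m).choose n : ℝ)) * 4 ^ m := by
      linear_combination ((m.choose (n - m) : ℝ) * 2 ^ (2 * m - n) * 2 ^ n) * ecb
        + (((2 * m).choose m : ℝ) * (m.choose (n - m) : ℝ)) * e6 - (4 : ℝ) ^ m * key
    rw [e1, e2, e3, e4, e5, cb]
    have hden : ((2 : ℝ) ^ n * (n.factorial : ℝ)) ≠ 0 := by positivity
    calc (Nat.centralBinom m : ℝ) / 4 ^ m * (m.choose (n - m) : ℝ)
          * (2 ^ (2 * m - n) * x ^ (2 * m - n)) * (-1) ^ (n - m) * t ^ n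
        = ((Nat.centralBinom m : ℝ) * (m.choose (n - m) : ℝ) * 2 ^ (2 * m - n)
            * x ^ (2 * m - n) * (-1) ^ (n - m) * t ^ n) / 4 ^ m := by ring
      _ = ((-1 : ℝ) ^ (n - m) * (n.choose m : ℝ) * ((n.factorial : ℝ)
            * ((2 * m).choose n : ℝ)) * x ^ (2 * m - n) * t ^ n) / (2 ^ n * (n.factorial : ℝ)) := by
          rw [div_eq_div_iff h4.ne' hden]
          linear_combination ((n.factorial : ℝ) * x ^ (2 * m - n) * (-1 : ℝ) ^ (n - m)
            * t ^ n) * hnum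
      _ = 1 / (2 ^ n * (n.factorial : ℝ)) * ((-1) ^ (n - m) * (n.choose m : ℝ)
            * ((n.factorial : ℝ) * ((2 * m).choose n : ℝ)) * x ^ (2 * m - n)) * t ^ n := by
          ring
  · simp only [Fgen, if_neg (show ¬ (n - m ≤ m) by omega)]
    rw [Nat.descFactorial_eq_zero_iff_lt.mpr h]
    simp


/-- Generating function of the Legendre polynomials: for `|x| ≤ 1` and `|t|` sufficiently
small, `∑ P_n(x) tⁿ = (1 - 2xt + t²)^{-1/2}`. -/
theorem legendre_generating_function (x : ℝ) (hx : |x| ≤ 1) :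
    ∃ ε > (0 : ℝ), ∀ t : ℝ, |t| < ε →
      HasSum (fun n : ℕ => legendreP n x * t ^ n)
        ((1 - 2 * x * t + t ^ 2) ^ (-(1 / 2 : ℝ))) := by
  refine ⟨1 / 5, by norm_num, fun t ht => ?_⟩
  set u : ℝ := 2 * x * t - t ^ 2 with hu_def
  have habs_u : |u| ≤ (2 + |t|) * |t| := by
    rw [hu_def]
    calc |2 * x * t - t ^ 2| ≤ |2 * x * t| + |t ^ 2| := abs_sub _ _
      _ ≤ 2 * |t| + |t| * |t| := by
          rw [abs_mul, abs_mul, abs_two, abs_pow]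
          nlinarith [abs_nonneg t, abs_nonneg x]
      _ = (2 + |t|) * |t| := by ring
  have hr : (2 + |t|) * |t| < 1 / 2 := by nlinarith [abs_nonneg t]
  have hu2 : |u| < 1 / 2 := lt_of_le_of_lt habs_u hr
  have hrpow := hasSum_cb_rpow hu2
  -- summability of |Fgen x t|
  have hGle : ∀ k : ℕ, ∀ j ∈ range (k + 1),
      |Fgen x t (k, j)| ≤ |t| ^ k * (|t| ^ j * 2 ^ (k - j) * (k.choose j : ℝ)) := by
    intro k j hj
    rw [Finset.mem_range] at hj
    simp only [Fgen, if_pos (show j ≤ k by omega)]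
    rw [abs_mul, abs_mul, abs_mul, abs_mul, abs_pow, abs_pow, abs_pow, abs_mul,
      abs_two, abs_neg, abs_one, one_pow, mul_one]
    have hc : |cb k| ≤ 1 := by rw [abs_of_nonneg (cb_nonneg k)]; exact cb_le_one k
    have hch : |(k.choose j : ℝ)| = (k.choose j : ℝ) := abs_of_nonneg (by positivity)
    have hx2 : (2 * |x|) ^ (k - j) ≤ 2 ^ (k - j) := by
      apply pow_le_pow_left₀ (by positivity)
      nlinarith [abs_nonneg x]
    have ht2 : |t| ^ (k + j) = |t| ^ k * |t| ^ j := by rw [← pow_add]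
    rw [hch, ht2]
    calc |cb k| * (k.choose j : ℝ) * (2 * |x|) ^ (k - j) * (|t| ^ k * |t| ^ j)
        ≤ 1 * (k.choose j : ℝ) * 2 ^ (k - j) * (|t| ^ k * |t| ^ j) := by
          apply mul_le_mul_of_nonneg_right _ (by positivity)
          apply mul_le_mul (mul_le_mul_of_nonneg_right hc (by positivity)) hx2
            (by positivity) (by positivity)
      _ = |t| ^ k * (|t| ^ j * 2 ^ (k - j) * (k.choose j : ℝ)) := by ring
  have hGsum : ∀ k : ℕ, ∑ j ∈ range (k + 1), |Fgen x t (k, j)| ≤ ((2 + |t|) * |t|) ^ k := by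
    intro k
    calc ∑ j ∈ range (k + 1), |Fgen x t (k, j)|
        ≤ ∑ j ∈ range (k + 1), |t| ^ k * (|t| ^ j * 2 ^ (k - j) * (k.choose j : ℝ)) :=
          Finset.sum_le_sum (hGle k)
      _ = |t| ^ k * (|t| + 2) ^ k := by
          rw [← Finset.mul_sum, add_pow]
      _ = ((2 + |t|) * |t|) ^ k := by rw [← mul_pow]; ring_nf
  have hsupp : ∀ k : ℕ, ∀ j ∉ range (k + 1), Fgen x t (k, j) = 0 := by
    intro k j hj
    rw [Finset.mem_range] at hj
    simp only [Fgen, if_neg (show ¬ j ≤ k by omega)]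
  have hGsummable : Summable fun p : ℕ × ℕ => |Fgen x t p| := by
    rw [summable_prod_of_nonneg (fun p => abs_nonneg _)]
    constructor
    · intro k
      exact summable_of_ne_finset_zero (s := range (k + 1))
        (fun j hj => by rw [hsupp k j hj, abs_zero])
    · apply Summable.of_nonneg_of_le (fun k => tsum_nonneg (fun j => abs_nonneg _))
        (fun k => ?_) (summable_geometric_of_lt_one (by positivity) (hr.trans (by norm_num)))
      rw [tsum_eq_sum (s := range (k + 1)) (fun j hj => by rw [hsupp k j hj, abs_zero])]
      exact hGsum k
  have hFsummable : Summable (Fgen x t) := hGsummable.of_abs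
  have hF : HasSum (Fgen x t) (∑' p, Fgen x t p) := hFsummable.hasSum
  have hfib : ∀ k : ℕ, HasSum (fun j => Fgen x t (k, j)) (cb k * u ^ k) := fun k =>
    hasSum_Fgen_fiber x t k
  have hksum : HasSum (fun k => cb k * u ^ k) (∑' p, Fgen x t p) :=
    hF.prod_fiberwise hfib
  have hTF : (∑' p, Fgen x t p) = (1 - u) ^ (-(1 / 2 : ℝ)) := hksum.unique hrpow
  have hsig : HasSum (fun q : Σ n : ℕ, Finset.HasAntidiagonal.antidiagonal n => Fgen x t q.2)
      (∑' p, Fgen x t p) := by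
    exact (Equiv.hasSum_iff Finset.HasAntidiagonal.sigmaAntidiagonalEquivProd).mpr hF
  have hfinal : HasSum (fun n : ℕ => ∑ p ∈ Finset.HasAntidiagonal.antidiagonal n, Fgen x t p)
      (∑' p, Fgen x t p) := by
    apply hsig.sigma
    intro n
    exact Finset.hasSum (Finset.HasAntidiagonal.antidiagonal n) (Fgen x t)
  have h1u : 1 - u = 1 - 2 * x * t + t ^ 2 := by rw [hu_def]; ring
  rw [hTF, h1u] at hfinal
  convert hfinal using 2 with n
  rw [sum_antidiagonal_Fgen]
end

section
/- With L and L♯ as in the previous context, the map r ↦ μ_r = [[r/(2N), 0],[0, -r/(2N)]] (mod L) induces a group isomorphism ℤ/2Nℤ ≅ L♯/L, and the induced ℚ/ℤ-valued quadratic form satisfies Q(μ_r) ≡ -r²/(4N) (mod ℤ). -/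
open Matrix

/-- The lattice `L = { [[b, a/N],[c, -b]] : a,b,c ∈ ℤ }` as an additive subgroup of the
2×2 rational matrices. -/
def Lgrp (N : ℕ) : AddSubgroup (Matrix (Fin 2) (Fin 2) ℚ) where
  carrier := {w | ∃ a b c : ℤ, w = !![(b : ℚ), (a : ℚ) / N; (c : ℚ), -(b : ℚ)]}
  zero_mem' := ⟨0, 0, 0, by ext i j; fin_cases i <;> fin_cases j <;> simp⟩
  add_mem' := by
    rintro x y ⟨a, b, c, rfl⟩ ⟨a', b', c', rfl⟩
    refine ⟨a + a', b + b', c + c', ?_⟩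
    ext i j; fin_cases i <;> fin_cases j <;>
      simp [Matrix.add_apply] <;> push_cast <;> ring
  neg_mem' := by
    rintro x ⟨a, b, c, rfl⟩
    refine ⟨-a, -b, -c, ?_⟩
    ext i j; fin_cases i <;> fin_cases j <;>
      simp [Matrix.neg_apply] <;> push_cast <;> ring

/-- The dual lattice `L♯ = { [[b/(2N), a/N],[c, -b/(2N)]] : a,b,c ∈ ℤ }`. -/
def Lsharpgrp (N : ℕ) : AddSubgroup (Matrix (Fin 2) (Fin 2) ℚ) where
  carrier := {w | ∃ a b c : ℤ,
    w = !![(b : ℚ) / (2 * N), (a : ℚ) / N; (c : ℚ), -(b : ℚ) / (2 * N)]}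
  zero_mem' := ⟨0, 0, 0, by ext i j; fin_cases i <;> fin_cases j <;> simp⟩
  add_mem' := by
    rintro x y ⟨a, b, c, rfl⟩ ⟨a', b', c', rfl⟩
    refine ⟨a + a', b + b', c + c', ?_⟩
    ext i j; fin_cases i <;> fin_cases j <;>
      simp [Matrix.add_apply] <;> push_cast <;> ring
  neg_mem' := by
    rintro x ⟨a, b, c, rfl⟩
    refine ⟨-a, -b, -c, ?_⟩
    ext i j; fin_cases i <;> fin_cases j <;>
      simp [Matrix.neg_apply] <;> push_cast <;> ring

/-- `μ_r = [[r/(2N), 0],[0, -r/(2N)]]`. -/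
def muElt (N : ℕ) (r : ℤ) : Matrix (Fin 2) (Fin 2) ℚ :=
  !![(r : ℚ) / (2 * N), 0; 0, -(r : ℚ) / (2 * N)]


lemma mu_mem_sharp (N : ℕ) (r : ℤ) : muElt N r ∈ Lsharpgrp N :=
  ⟨0, r, 0, by ext i j; fin_cases i <;> fin_cases j <;> simp [muElt]⟩

lemma mu_add (N : ℕ) (r s : ℤ) : muElt N (r + s) = muElt N r + muElt N s := by
  ext i j; fin_cases i <;> fin_cases j <;>
    simp [muElt, Matrix.add_apply] <;> ring

def muSharp (N : ℕ) (r : ℤ) : Lsharpgrp N := ⟨muElt N r, mu_mem_sharp N r⟩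

lemma muSharp_add (N : ℕ) (r s : ℤ) :
    muSharp N (r + s) = muSharp N r + muSharp N s :=
  Subtype.ext (mu_add N r s)

def gHom (N : ℕ) : ℤ →+ (Lsharpgrp N) ⧸ ((Lgrp N).addSubgroupOf (Lsharpgrp N)) :=
  AddMonoidHom.mk' (fun r => QuotientAddGroup.mk (muSharp N r)) (by
    intro r s
    simp only [muSharp_add, QuotientAddGroup.mk_add])

lemma gHom_eq_zero_iff (N : ℕ) (hN : 0 < N) (r : ℤ) :
    gHom N r = 0 ↔ ((2 * N : ℕ) : ℤ) ∣ r := by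
  have hNQ : (N : ℚ) ≠ 0 := by positivity
  show QuotientAddGroup.mk (muSharp N r) = 0 ↔ _
  rw [QuotientAddGroup.eq_zero_iff, AddSubgroup.mem_addSubgroupOf]
  constructor
  · rintro ⟨a, b, c, h⟩
    have h00 := congrFun (congrFun h 0) 0
    simp only [muSharp, muElt, Matrix.of_apply, Matrix.cons_val', Matrix.cons_val_zero,
      Matrix.empty_val', Matrix.cons_val_fin_one] at h00
    have hrb : (r : ℚ) = 2 * N * b := by
      field_simp at h00; linarith
    have hrb' : r = 2 * N * b := by exact_mod_cast hrb
    exact ⟨b, by push_cast; linarith⟩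
  · rintro ⟨b, rfl⟩
    refine ⟨0, b, 0, ?_⟩
    show muElt N _ = _
    ext i j; fin_cases i <;> fin_cases j
    all_goals first
      | (simp [muElt]; push_cast; field_simp; ring)
      | (simp [muElt]; push_cast; field_simp)
      | simp [muElt]

/-- The map `r ↦ μ_r (mod L)` induces a group isomorphism `ℤ/2Nℤ ≅ L♯/L`, and the
induced `ℚ/ℤ`-valued quadratic form satisfies `Q(μ_r) ≡ -r²/(4N) (mod ℤ)`. -/
theorem zmod_iso_discriminant_group (N : ℕ) (hN : 0 < N) :
    ∃ e : ZMod (2 * N) ≃+ (Lsharpgrp N) ⧸ ((Lgrp N).addSubgroupOf (Lsharpgrp N)),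
      ∀ (r : ℤ) (h : muElt N r ∈ Lsharpgrp N),
        e ((r : ZMod (2 * N))) = QuotientAddGroup.mk (⟨muElt N r, h⟩ : Lsharpgrp N) ∧
        ∃ k : ℤ, (N : ℚ) * (muElt N r).det - (-(r : ℚ) ^ 2 / (4 * N)) = (k : ℚ) := by
  
  haveI : NeZero (2 * N) := ⟨by omega⟩
  have hNQ : (N : ℚ) ≠ 0 := by positivity
  have hker : gHom N (((2 * N : ℕ) : ℤ)) = 0 :=
    (gHom_eq_zero_iff N hN _).2 ⟨1, by ring⟩
  let f := ZMod.lift (2 * N) ⟨gHom N, hker⟩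
  have hf : ∀ r : ℤ, f (r : ZMod (2 * N)) = QuotientAddGroup.mk (muSharp N r) :=
    fun r => ZMod.lift_coe _ _ r
  have hinj : Function.Injective f := by
    rw [injective_iff_map_eq_zero]
    intro x hx
    have hx' : x = ((x.val : ℤ) : ZMod (2 * N)) := by
      rw [Int.cast_natCast, ZMod.natCast_val, ZMod.cast_id]
    rw [hx', hf] at hx
    have hd := (gHom_eq_zero_iff N hN _).1 hx
    have hdvd : (2 * N) ∣ x.val := by exact_mod_cast hd
    have hval : x.val = 0 := Nat.eq_zero_of_dvd_of_lt hdvd (ZMod.val_lt x)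
    rw [hx', hval]; simp
  have hsurj : Function.Surjective f := by
    intro q
    obtain ⟨w, rfl⟩ := QuotientAddGroup.mk_surjective q
    obtain ⟨a, b, c, hw⟩ := w.2
    refine ⟨(b : ZMod (2 * N)), ?_⟩
    rw [hf, QuotientAddGroup.eq]
    rw [AddSubgroup.mem_addSubgroupOf]
    refine ⟨a, 0, c, ?_⟩
    show -(muSharp N b : Matrix (Fin 2) (Fin 2) ℚ) + (w : Matrix (Fin 2) (Fin 2) ℚ) = _
    rw [hw]
    ext i j; fin_cases i <;> fin_cases j <;>
      simp [muSharp, muElt, Matrix.add_apply, Matrix.neg_apply]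
  refine ⟨AddEquiv.ofBijective f ⟨hinj, hsurj⟩, ?_⟩
  intro r h
  constructor
  · show f (r : ZMod (2 * N)) = _
    rw [hf]; rfl
  · refine ⟨0, ?_⟩
    rw [Matrix.det_fin_two]
    simp only [muElt, Matrix.of_apply, Matrix.cons_val', Matrix.cons_val_zero, Matrix.cons_val_one,
      Matrix.head_cons, Matrix.empty_val', Matrix.cons_val_fin_one, Matrix.head_fin_const]
    field_simp
    ring
end

section
/- For all integers j ≥ 0 and all real x, ∑_{s=0}^j C(j-1/2,s) C(j,s) x^{2j-2s}(x²-1)^s = P_{2j}(x), where C(j-1/2,s) is the generalized binomial coefficient. -/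
open Finset

/-- The generalized binomial coefficient `C(x, s) = x(x-1)⋯(x-s+1)/s!`. -/
noncomputable def genBinom (x : ℝ) (s : ℕ) : ℝ :=
  (∏ i ∈ Finset.range s, (x - i)) / (s.factorial : ℝ)


open Polynomial

lemma iteratedDeriv_poly (n : ℕ) (p : Polynomial ℝ) (x : ℝ) :
    iteratedDeriv n (fun y : ℝ => p.eval y) x = (derivative^[n] p).eval x := by
  induction n generalizing p with
  | zero => simp
  | succ n ih =>
    rw [iteratedDeriv_succ', Function.iterate_succ_apply]
    rw [← ih (derivative p)]
    congr 1
    funext y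
    exact Polynomial.deriv (p := p)

lemma vdm (j k : ℕ) (hk : k ≤ 2 * j) :
    ∑ s ∈ range (j + 1), k.choose s * (2 * j - k).choose s = (2 * j).choose k := by
  have h0 : (2 * j).choose k = ∑ i ∈ range (k + 1), k.choose i * (2 * j - k).choose (k - i) := by
    have := Nat.add_choose_eq k (2 * j - k) k
    rw [Nat.add_sub_cancel' hk] at this
    rw [this, Finset.Nat.sum_antidiagonal_eq_sum_range_succ (fun a b => k.choose a * (2*j-k).choose b)]
  have h1 : ∑ i ∈ range (k + 1), k.choose i * (2 * j - k).choose (k - i)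
      = ∑ i ∈ range (k + 1), k.choose i * (2 * j - k).choose i := by
    rw [← Finset.sum_range_reflect]
    refine Finset.sum_congr rfl fun i hi => ?_
    rw [mem_range] at hi
    rw [Nat.add_sub_cancel, Nat.choose_symm (by omega), Nat.sub_sub_self (by omega)]
  rw [h0, h1]
  set M := max j k with hM
  have e1 : ∑ i ∈ range (k + 1), k.choose i * (2 * j - k).choose i
      = ∑ i ∈ range (M + 1), k.choose i * (2 * j - k).choose i := by
    refine Finset.sum_subset (by intro i hi; simp_all) fun i _ hi => ?_
    simp only [mem_range, not_lt] at hi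
    rw [Nat.choose_eq_zero_of_lt (by omega), zero_mul]
  have e2 : ∑ i ∈ range (j + 1), k.choose i * (2 * j - k).choose i
      = ∑ i ∈ range (M + 1), k.choose i * (2 * j - k).choose i := by
    refine Finset.sum_subset (by intro i hi; simp_all) fun i hi2 hi => ?_
    simp only [mem_range, not_lt] at hi
    rcases le_or_gt i k with h | h
    · rw [Nat.choose_eq_zero_of_lt (show 2*j - k < i by omega), mul_zero]
    · rw [Nat.choose_eq_zero_of_lt h, zero_mul]
  rw [e1, ← e2]

lemma natkey (s t r : ℕ) :
    (2*s+t+r).choose (2*s) * ((2*s).choose s * (t+r).choose t) =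
    (2*s+t+r).choose (s+t) * ((s+t).choose s * (s+r).choose s) := by
  have hD : 0 < s.factorial * s.factorial * t.factorial * r.factorial :=
    by positivity
  apply Nat.eq_of_mul_eq_mul_right hD
  have l1 : (2*s+t+r).choose (2*s) * ((2*s).choose s * (t+r).choose t) *
      (s.factorial * s.factorial * t.factorial * r.factorial) = (2*s+t+r).factorial := by
    have a1 : (2*s).choose s * s.factorial * s.factorial = (2*s).factorial := by
      have := Nat.choose_mul_factorial_mul_factorial (show s ≤ 2*s by omega)
      rwa [show 2*s - s = s by omega] at this
    have a2 : (t+r).choose t * t.factorial * r.factorial = (t+r).factorial := by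
      have := Nat.choose_mul_factorial_mul_factorial (show t ≤ t+r by omega)
      rwa [show t + r - t = r by omega] at this
    have a3 : (2*s+t+r).choose (2*s) * (2*s).factorial * (t+r).factorial
        = (2*s+t+r).factorial := by
      have := Nat.choose_mul_factorial_mul_factorial (show 2*s ≤ 2*s+t+r by omega)
      rwa [show 2*s+t+r - 2*s = t+r by omega] at this
    calc (2*s+t+r).choose (2*s) * ((2*s).choose s * (t+r).choose t) *
        (s.factorial * s.factorial * t.factorial * r.factorial)
        = (2*s+t+r).choose (2*s) * ((2*s).choose s * s.factorial * s.factorial) *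
          ((t+r).choose t * t.factorial * r.factorial) := by ring
      _ = (2*s+t+r).choose (2*s) * (2*s).factorial * (t+r).factorial := by rw [a1, a2]
      _ = _ := a3
  have l2 : (2*s+t+r).choose (s+t) * ((s+t).choose s * (s+r).choose s) *
      (s.factorial * s.factorial * t.factorial * r.factorial) = (2*s+t+r).factorial := by
    have a1 : (s+t).choose s * s.factorial * t.factorial = (s+t).factorial := by
      have := Nat.choose_mul_factorial_mul_factorial (show s ≤ s+t by omega)
      rwa [show s + t - s = t by omega] at this
    have a2 : (s+r).choose s * s.factorial * r.factorial = (s+r).factorial := by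
      have := Nat.choose_mul_factorial_mul_factorial (show s ≤ s+r by omega)
      rwa [show s + r - s = r by omega] at this
    have a3 : (2*s+t+r).choose (s+t) * (s+t).factorial * (s+r).factorial
        = (2*s+t+r).factorial := by
      have := Nat.choose_mul_factorial_mul_factorial (show s+t ≤ 2*s+t+r by omega)
      rwa [show 2*s+t+r - (s+t) = s+r by omega] at this
    calc (2*s+t+r).choose (s+t) * ((s+t).choose s * (s+r).choose s) *
        (s.factorial * s.factorial * t.factorial * r.factorial)
        = (2*s+t+r).choose (s+t) * ((s+t).choose s * s.factorial * t.factorial) *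
          ((s+r).choose s * s.factorial * r.factorial) := by ring
      _ = (2*s+t+r).choose (s+t) * (s+t).factorial * (s+r).factorial := by rw [a1, a2]
      _ = _ := a3
  rw [l1, l2]

-- C(n,k) * descF(n, n-k) * descF(n, k) = n! * C(n,k)^2 for k ≤ n

lemma desckey (n k : ℕ) (h : k ≤ n) :
    n.choose k * n.descFactorial (n - k) * n.descFactorial k
      = n.factorial * n.choose k ^ 2 := by
  have d1 : n.descFactorial k = n.choose k * k.factorial := by
    rw [Nat.descFactorial_eq_factorial_mul_choose]; ring
  have d2 : n.descFactorial (n - k) = n.choose (n-k) * (n-k).factorial := by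
    rw [Nat.descFactorial_eq_factorial_mul_choose]; ring
  rw [d1, d2, Nat.choose_symm h]
  have := Nat.choose_mul_factorial_mul_factorial h
  calc n.choose k * (n.choose k * (n - k).factorial) * (n.choose k * k.factorial)
      = n.choose k ^ 2 * (n.choose k * k.factorial * (n-k).factorial) := by ring
    _ = n.factorial * n.choose k ^ 2 := by rw [this]; ring

lemma prodkey (j s : ℕ) (h : s ≤ j) :
    (∏ i ∈ range s, ((j:ℝ) - 1/2 - i)) * 4^s * (j.factorial : ℝ) *
      ((2*j-2*s).factorial : ℝ)
    = ((2*j).factorial : ℝ) * ((j-s).factorial : ℝ) := by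
  induction s with
  | zero => simp [mul_comm]
  | succ s ih =>
    obtain ⟨d, rfl⟩ : ∃ d, j = s + 1 + d := ⟨j - (s+1), by omega⟩
    have ih' := ih (by omega)
    have e1 : 2*(s+1+d) - 2*s = 2*d+2 := by omega
    have e2 : 2*(s+1+d) - 2*(s+1) = 2*d := by omega
    have e3 : s+1+d - s = d+1 := by omega
    have e4 : s+1+d - (s+1) = d := by omega
    rw [e1, e3] at ih'
    rw [e2, e4]
    rw [prod_range_succ]
    have f2 : ((2*d+2).factorial : ℝ) = (2*d+2) * ((2*d+1) * (2*d).factorial) := by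
      rw [show 2*d+2 = (2*d+1)+1 by omega, Nat.factorial_succ, Nat.factorial_succ]
      push_cast; ring
    have f3 : ((d+1).factorial : ℝ) = (d+1) * d.factorial := by
      rw [Nat.factorial_succ]; push_cast; ring
    rw [f2, f3] at ih'
    push_cast
    push_cast at ih'
    apply mul_right_cancel₀ (show ((2*(d:ℝ)+2)*(2*(d:ℝ)+1)) ≠ 0 by positivity)
    linear_combination (4*((d:ℝ)+1/2)) * ih'

lemma coeffkey (j s : ℕ) (h : s ≤ j) :
    genBinom ((j:ℝ) - 1/2) s * (j.choose s : ℝ) * 4^s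
      = ((2*j).choose (2*s) : ℝ) * ((2*s).choose s : ℝ) := by
  have f0 : (0:ℝ) < s.factorial := by exact_mod_cast s.factorial_pos
  have f1 : (0:ℝ) < j.factorial := by exact_mod_cast j.factorial_pos
  have f2 : (0:ℝ) < (j-s).factorial := by exact_mod_cast (j-s).factorial_pos
  have f3 : (0:ℝ) < (2*j-2*s).factorial := by exact_mod_cast (2*j-2*s).factorial_pos
  have f4 : (0:ℝ) < (2*s).factorial := by exact_mod_cast (2*s).factorial_pos
  have vprod : (∏ i ∈ range s, ((j:ℝ) - 1/2 - i))
      = ((2*j).factorial : ℝ) * ((j-s).factorial : ℝ) /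
        (4^s * (j.factorial : ℝ) * ((2*j-2*s).factorial : ℝ)) := by
    rw [eq_div_iff (by positivity)]
    linear_combination prodkey j s h
  have vch : (j.choose s : ℝ) = (j.factorial : ℝ) / (s.factorial * (j-s).factorial) :=
    Nat.cast_choose ℝ h
  have vc1 : ((2*j).choose (2*s) : ℝ)
      = ((2*j).factorial : ℝ) / ((2*s).factorial * ((2*j-2*s).factorial : ℝ)) := by
    have := Nat.cast_choose ℝ (show 2*s ≤ 2*j by omega)
    rwa [show 2*j - 2*s = 2*j-2*s from rfl] at this
  have vc2 : ((2*s).choose s : ℝ)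
      = ((2*s).factorial : ℝ) / (s.factorial * (s.factorial : ℝ)) := by
    have := Nat.cast_choose ℝ (show s ≤ 2*s by omega)
    rwa [show 2*s - s = s by omega] at this
  rw [genBinom, vprod, vch, vc1, vc2]
  field_simp

lemma sumkey (j : ℕ) (u v : ℝ) :
    ∑ s ∈ range (j+1),
        ((2*j).choose (2*s) : ℝ) * ((2*s).choose s : ℝ) * ((u+v)^(2*j-2*s) * (u*v)^s)
      = ∑ k ∈ range (2*j+1), ((2*j).choose k : ℝ)^2 * (u^k * v^(2*j-k)) := by
  have step1 : ∀ s ∈ range (j+1),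
      ((2*j).choose (2*s) : ℝ) * ((2*s).choose s : ℝ) * ((u+v)^(2*j-2*s) * (u*v)^s)
      = ∑ k ∈ range (2*j+1),
          ((((2*j).choose k) * (k.choose s * ((2*j-k).choose s)) : ℕ) : ℝ)
            * (u^k * v^(2*j-k)) := by
    intro s hs
    rw [mem_range] at hs
    have hsj : s ≤ j := by omega
    calc ((2*j).choose (2*s) : ℝ) * ((2*s).choose s : ℝ) * ((u+v)^(2*j-2*s) * (u*v)^s)
        = ∑ t ∈ range (2*j-2*s+1),
            ((2*j).choose (2*s) : ℝ) * ((2*s).choose s : ℝ) *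
              ((u^t * v^(2*j-2*s-t) * ((2*j-2*s).choose t : ℝ)) * (u*v)^s) := by
          rw [add_pow, Finset.sum_mul, Finset.mul_sum]
      _ = ∑ k ∈ Ico s (2*j-s+1),
            ((((2*j).choose k) * (k.choose s * ((2*j-k).choose s)) : ℕ) : ℝ)
              * (u^k * v^(2*j-k)) := by
          rw [Finset.sum_Ico_eq_sum_range,
            show 2*j-s+1-s = 2*j-2*s+1 by omega]
          refine Finset.sum_congr rfl fun t ht => ?_
          rw [mem_range] at ht
          obtain ⟨r, hr⟩ : ∃ r, 2*j-2*s = t + r := ⟨2*j-2*s-t, by omega⟩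
          have hcast : (((2*j).choose (2*s)) * ((2*s).choose s * ((2*j-2*s).choose t)) : ℕ)
              = ((2*j).choose (s+t)) * ((s+t).choose s * ((s+r).choose s)) := by
            rw [show 2*j = 2*s+t+r by omega]
            rw [show 2*s+t+r - 2*s = t+r by omega]
            exact natkey s t r
          have hcast' : (((2*j).choose (2*s)) : ℝ) * (((2*s).choose s) * (((2*j-2*s).choose t))) 
              = (((2*j).choose (s+t)) : ℝ) * (((s+t).choose s) * (((s+r).choose s))) := by
            exact_mod_cast hcast
          rw [show 2*j-2*s-t = r by omega, show 2*j-(s+t) = s+r by omega]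
          push_cast
          linear_combination (u^t * v^r * (u*v)^s) * hcast'
      _ = ∑ k ∈ range (2*j+1),
            ((((2*j).choose k) * (k.choose s * ((2*j-k).choose s)) : ℕ) : ℝ)
              * (u^k * v^(2*j-k)) := by
          refine Finset.sum_subset ?_ ?_
          · intro k hk
            rw [mem_Ico] at hk
            rw [mem_range]
            omega
          · intro k hk hk2
            rw [mem_range] at hk
            rw [mem_Ico, not_and_or] at hk2
            rcases hk2 with h | h
            · rw [Nat.choose_eq_zero_of_lt (by omega : k < s)]
              simp
            · rw [Nat.choose_eq_zero_of_lt (show 2*j-k < s by omega)]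
              simp
  rw [Finset.sum_congr rfl step1, Finset.sum_comm]
  refine Finset.sum_congr rfl fun k hk => ?_
  rw [mem_range] at hk
  have inner : (∑ s ∈ range (j+1),
      ((((2*j).choose k) * (k.choose s * ((2*j-k).choose s)) : ℕ) : ℝ))
      = (((2*j).choose k : ℕ) : ℝ) *
          ((∑ s ∈ range (j+1), k.choose s * ((2*j-k).choose s) : ℕ) : ℝ) := by
    push_cast
    rw [← Finset.mul_sum]
  rw [← Finset.sum_mul, inner, vdm j k (by omega)]
  ring

/-- `P_{2j}(x) = ∑_{s=0}^{j} C(j-1/2,s) C(j,s) x^{2j-2s} (x²-1)ˢ` for every real `x`. -/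
theorem legendre_even_expansion (j : ℕ) (x : ℝ) :
    legendreP (2 * j) x =
      ∑ s ∈ Finset.range (j + 1),
        genBinom ((j : ℝ) - 1 / 2) s * (j.choose s : ℝ) * x ^ (2 * j - 2 * s) *
          (x ^ 2 - 1) ^ s := by
  have hL : legendreP (2*j) x
      = (2^(2*j) : ℝ)⁻¹ * ∑ k ∈ range (2*j+1),
          ((2*j).choose k : ℝ)^2 * ((x-1)^k * (x+1)^(2*j-k)) := by
    rw [legendreP]
    have hfun : (fun y : ℝ => (y^2-1)^(2*j))
        = fun y : ℝ => (((X - C 1)^(2*j) * (X - C (-1))^(2*j) : Polynomial ℝ)).eval y := by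
      funext y
      simp only [Polynomial.eval_mul, Polynomial.eval_pow, Polynomial.eval_sub,
        Polynomial.eval_X, Polynomial.eval_C]
      rw [← mul_pow]
      ring_nf
    rw [hfun, iteratedDeriv_poly, Polynomial.iterate_derivative_mul,
      Polynomial.eval_finset_sum]
    have hterm : ∀ k ∈ range (2*j+1),
        (((2*j).choose k • (derivative^[2*j-k] ((X - C (1:ℝ))^(2*j)) *
          derivative^[k] ((X - C (-1:ℝ))^(2*j)))).eval x)
        = ((2*j).factorial : ℝ) * (((2*j).choose k : ℝ)^2 * ((x-1)^k * (x+1)^(2*j-k))) := by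
      intro k hk
      rw [mem_range] at hk
      rw [Polynomial.iterate_derivative_X_sub_pow, Polynomial.iterate_derivative_X_sub_pow,
        show 2*j - (2*j-k) = k by omega]
      simp only [Polynomial.eval_smul, Polynomial.eval_mul, Polynomial.eval_pow,
        Polynomial.eval_sub, Polynomial.eval_X, Polynomial.eval_C, Polynomial.eval_natCast, smul_eq_mul, nsmul_eq_mul]
      have hd' : (((2*j).choose k : ℝ)) * (((2*j).descFactorial (2*j-k) : ℝ))
          * (((2*j).descFactorial k : ℝ))
          = ((2*j).factorial : ℝ) * ((2*j).choose k : ℝ)^2 := by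
        exact_mod_cast desckey (2*j) k (by omega)
      linear_combination ((x-1)^k * (x+1)^(2*j-k)) * hd'
    rw [Finset.sum_congr rfl hterm, ← Finset.mul_sum]
    have hfac : ((2*j).factorial : ℝ) ≠ 0 := by
      exact_mod_cast (2*j).factorial_ne_zero
    have h2 : (2:ℝ)^(2*j) ≠ 0 := by positivity
    field_simp
  rw [hL]
  have hR : ∀ s ∈ range (j+1),
      genBinom ((j:ℝ) - 1/2) s * (j.choose s : ℝ) * x^(2*j-2*s) * (x^2-1)^s
      = (2^(2*j):ℝ)⁻¹ * (((2*j).choose (2*s) : ℝ) * ((2*s).choose s : ℝ) *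
          (((x-1)+(x+1))^(2*j-2*s) * ((x-1)*(x+1))^s)) := by
    intro s hs
    rw [mem_range] at hs
    have hck := coeffkey j s (by omega)
    have hxy : ((x-1)+(x+1)) = 2*x := by ring
    rw [hxy, mul_pow, show ((x-1)*(x+1)) = x^2 - 1 by ring]
    have hpow : (2:ℝ)^(2*j-2*s) * 4^s * ((2:ℝ)^(2*j))⁻¹ = 1 := by
      have h4 : (4:ℝ)^s = 2^(2*s) := by
        rw [show (4:ℝ) = 2^2 by norm_num, ← pow_mul]
      rw [h4, ← pow_add, show 2*j-2*s+2*s = 2*j by omega]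
      field_simp
    linear_combination ((2:ℝ)^(2*j))⁻¹ * (2:ℝ)^(2*j-2*s) * x^(2*j-2*s) * (x^2-1)^s * hck
      - genBinom ((j:ℝ)-1/2) s * (j.choose s : ℝ) * x^(2*j-2*s) * (x^2-1)^s * hpow
  rw [Finset.sum_congr rfl hR, ← Finset.mul_sum, sumkey j (x-1) (x+1)]
end
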